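/- arXiv:2411.00703 — 2 statements merged into one kernel-verified Lean document; each statement's English description precedes it below -/
import Mathlib

section
/- If the extended-state set Ξ ⊆ ℝ^{(m+p)T_ini} is control invariant in the input-output sense (for every reachable extended state ξ(t) ∈ Ξ there exists an admissible input u(t) ∈ U with ξ(t+1) ∈ Ξ), and the observability matrix of depth T_ini is injective, then the set of underlying states X_Ξ = {x_t : ξ(t) ∈ Ξ for some system trajectory} is control invariant for the state dynamics: for every x ∈ X_Ξ there exists u ∈ U with A x + B u ∈ X_Ξ. -/
/-- The extended state at time `t`: the last `T_ini` inputs and outputs. -/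
def xiOf {m p : ℕ} (u : ℕ → Fin m → ℝ) (y : ℕ → Fin p → ℝ) (Tini t : ℕ) :
    (Fin Tini → Fin m → ℝ) × (Fin Tini → Fin p → ℝ) :=
  ((fun i => u (t - Tini + i)), (fun i => y (t - Tini + i)))

/-!
Take a trajectory realising `x ∈ X_Ξ` at time `t` and the input `u_t ∈ U` that invariance of `Ξ`
provides. Re-simulating the system from the same initial state, with `u_t` inserted at time `t`,
reproduces the old trajectory up to time `t`, so its extended state at time `t + 1` is exactly the
updated one, which lies in `Ξ`; its state at time `t + 1` is `A x + B u_t`, which therefore lies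
in `X_Ξ`.
-/

open Matrix

namespace Matrix

variable {R σ ι : Type*} [Semiring R] [Fintype σ] [Fintype ι]
  (A : Matrix σ σ R) (B : Matrix σ ι R)

def stateTraj (x₀ : σ → R) (u : ℕ → ι → R) : ℕ → σ → R
  | 0 => x₀
  | k + 1 => A *ᵥ stateTraj x₀ u k + B *ᵥ u k

@[simp]
theorem stateTraj_zero (x₀ : σ → R) (u : ℕ → ι → R) : stateTraj A B x₀ u 0 = x₀ := rfl

@[simp]
theorem stateTraj_succ (x₀ : σ → R) (u : ℕ → ι → R) (k : ℕ) :
    stateTraj A B x₀ u (k + 1) = A *ᵥ stateTraj A B x₀ u k + B *ᵥ u k := rfl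

theorem stateTraj_eq_of_le {x : ℕ → σ → R} {u u' : ℕ → ι → R}
    (hx : ∀ k, x (k + 1) = A *ᵥ x k + B *ᵥ u k) {t : ℕ} (hu : ∀ k < t, u' k = u k) :
    ∀ k ≤ t, stateTraj A B (x 0) u' k = x k
  | 0, _ => rfl
  | k + 1, hk => by
    rw [stateTraj_succ, stateTraj_eq_of_le hx hu k (by omega), hu k (by omega), hx]

end Matrix

theorem xiOf_congr {m p Tini t : ℕ} {u u' : ℕ → Fin m → ℝ} {y y' : ℕ → Fin p → ℝ}
    (hu : ∀ k < t, u k = u' k) (hy : ∀ k < t, y k = y' k) (ht : Tini ≤ t) :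
    xiOf u y Tini t = xiOf u' y' Tini t := by
  have hwindow (i : Fin Tini) : t - Tini + i < t := by omega
  simp only [xiOf, hu _ (hwindow _), hy _ (hwindow _)]

theorem io_invariance_implies_state_invariance_general {n m p Tini : ℕ}
    (A : Matrix (Fin n) (Fin n) ℝ) (B : Matrix (Fin n) (Fin m) ℝ)
    (C : Matrix (Fin p) (Fin n) ℝ) (D : Matrix (Fin p) (Fin m) ℝ)
    (U : Set (Fin m → ℝ))
    (Ξ : Set ((Fin Tini → Fin m → ℝ) × (Fin Tini → Fin p → ℝ)))
    (hinv : ∀ (x : ℕ → Fin n → ℝ) (u : ℕ → Fin m → ℝ) (y : ℕ → Fin p → ℝ)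
      (t : ℕ), Tini ≤ t →
      (∀ k, x (k + 1) = A.mulVec (x k) + B.mulVec (u k) ∧
        y k = C.mulVec (x k) + D.mulVec (u k)) →
      xiOf u y Tini t ∈ Ξ →
      ∃ ut ∈ U,
        xiOf (Function.update u t ut)
          (Function.update y t (C.mulVec (x t) + D.mulVec ut)) Tini (t + 1)
          ∈ Ξ) :
    ∀ xt ∈ {xt | ∃ (x : ℕ → Fin n → ℝ) (u : ℕ → Fin m → ℝ)
        (y : ℕ → Fin p → ℝ) (t : ℕ), Tini ≤ t ∧
        (∀ k, x (k + 1) = A.mulVec (x k) + B.mulVec (u k) ∧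
          y k = C.mulVec (x k) + D.mulVec (u k)) ∧
        xiOf u y Tini t ∈ Ξ ∧ xt = x t},
      ∃ ut ∈ U, A.mulVec xt + B.mulVec ut ∈
        {xt | ∃ (x : ℕ → Fin n → ℝ) (u : ℕ → Fin m → ℝ)
          (y : ℕ → Fin p → ℝ) (t : ℕ), Tini ≤ t ∧
          (∀ k, x (k + 1) = A.mulVec (x k) + B.mulVec (u k) ∧
            y k = C.mulVec (x k) + D.mulVec (u k)) ∧
          xiOf u y Tini t ∈ Ξ ∧ xt = x t} := by
  rintro _ ⟨x, u, y, t, ht, hdyn, hxi, rfl⟩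
  obtain ⟨ut, hutU, hxi'⟩ := hinv x u y t ht hdyn hxi
  set u' := Function.update u t ut
  set x' := stateTraj A B (x 0) u'
  have hx' : ∀ k ≤ t, x' k = x k :=
    stateTraj_eq_of_le A B (fun k => (hdyn k).1) fun k hk => Function.update_of_ne hk.ne _ _
  refine ⟨ut, hutU, x', u', fun k => C *ᵥ x' k + D *ᵥ u' k, t + 1, by omega,
    fun k => ⟨rfl, rfl⟩, ?_, ?_⟩
  · convert hxi' using 1
    refine xiOf_congr (fun _ _ => rfl) (fun k hk => ?_) (by omega)
    rcases Nat.lt_succ_iff_lt_or_eq.1 hk with hk | rfl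
    · simp [u', hk.ne, hx' k hk.le, (hdyn k).2]
    · simp [u', hx' k le_rfl]
  · simp [x', u', hx' t le_rfl]

/-- If the extended-state set `Ξ` is control invariant in the input-output
sense and the observability matrix of depth `T_ini` is injective, then the set
`X_Ξ` of underlying states compatible with `Ξ` is control invariant for the
state dynamics. -/
theorem io_invariance_implies_state_invariance {n m p Tini : ℕ}
    (hTini : 1 ≤ Tini)
    (A : Matrix (Fin n) (Fin n) ℝ) (B : Matrix (Fin n) (Fin m) ℝ)
    (C : Matrix (Fin p) (Fin n) ℝ) (D : Matrix (Fin p) (Fin m) ℝ)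
    (U : Set (Fin m → ℝ))
    (Ξ : Set ((Fin Tini → Fin m → ℝ) × (Fin Tini → Fin p → ℝ)))
    (hobs : Function.Injective
      (fun v : Fin n → ℝ =>
        fun i : Fin Tini => C.mulVec ((A ^ (i : ℕ)).mulVec v)))
    (hinv : ∀ (x : ℕ → Fin n → ℝ) (u : ℕ → Fin m → ℝ) (y : ℕ → Fin p → ℝ)
      (t : ℕ), Tini ≤ t →
      (∀ k, x (k + 1) = A.mulVec (x k) + B.mulVec (u k) ∧
        y k = C.mulVec (x k) + D.mulVec (u k)) →
      xiOf u y Tini t ∈ Ξ →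
      ∃ ut ∈ U,
        xiOf (Function.update u t ut)
          (Function.update y t (C.mulVec (x t) + D.mulVec ut)) Tini (t + 1)
          ∈ Ξ) :
    ∀ xt ∈ {xt | ∃ (x : ℕ → Fin n → ℝ) (u : ℕ → Fin m → ℝ)
        (y : ℕ → Fin p → ℝ) (t : ℕ), Tini ≤ t ∧
        (∀ k, x (k + 1) = A.mulVec (x k) + B.mulVec (u k) ∧
          y k = C.mulVec (x k) + D.mulVec (u k)) ∧
        xiOf u y Tini t ∈ Ξ ∧ xt = x t},
      ∃ ut ∈ U, A.mulVec xt + B.mulVec ut ∈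
        {xt | ∃ (x : ℕ → Fin n → ℝ) (u : ℕ → Fin m → ℝ)
          (y : ℕ → Fin p → ℝ) (t : ℕ), Tini ≤ t ∧
          (∀ k, x (k + 1) = A.mulVec (x k) + B.mulVec (u k) ∧
            y k = C.mulVec (x k) + D.mulVec (u k)) ∧
          xiOf u y Tini t ∈ Ξ ∧ xt = x t} :=
  io_invariance_implies_state_invariance_general A B C D U Ξ hinv
end

section
/- Suppose Ξ⁰ ⊆ Ξ¹ ⊆ ⋯ ⊆ Ξ^{n*} ⊆ ℝ^d are nested sets with the N-step reachability property: for every l ∈ {1,…,n*} and every ξ ∈ Ξ^l there exist an admissible control sequence and a time t ∈ {1,…,N} such that the resulting extended-state trajectory starting at ξ satisfies ξ_t ∈ Ξ^{l−1} and ξ_s ∈ Ξ^l for all 0 ≤ s ≤ t. If Ξ⁰ is an invariant equilibrium set (from each ξ ∈ Ξ⁰ some admissible control keeps the successor in Ξ⁰), then from any ξ₀ ∈ Ξ^l there exists an admissible control sequence whose trajectory reaches Ξ⁰ within l·N steps and remains in Ξ^l ∪ ⋯ ∪ Ξ⁰ ⊆ Ξ^l at all times. -/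
/-!
Induction on the level `l`. From `ξ₀ ∈ Ξ^{l+1}` the reachability property gives a finite
admissible run that stays in `Ξ^{l+1}` and enters `Ξ^l` after `t ≤ N` steps; from there the
induction hypothesis gives an infinite run reaching `Ξ⁰` within `l·N` steps inside
`Ξ^l ⊆ Ξ^{l+1}`. Splicing the two runs at time `t` gives the run for level `l + 1`. At level
`0` the invariance of `Ξ⁰` provides an infinite run in `Ξ⁰`, built by iterating a choice of
successor.
-/

variable {α β : Type*}

def IsAdmissibleRun (F : α → β → Set α) (U : Set β) (ξ : ℕ → α) (u : ℕ → β) : Prop :=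
  ∀ k, u k ∈ U ∧ ξ (k + 1) ∈ F (ξ k) (u k)

def splice {γ : Type*} (t : ℕ) (f g : ℕ → γ) : ℕ → γ :=
  fun k => if k < t then f k else g (k - t)

section splice

variable {γ : Type*} {t k : ℕ} {f g : ℕ → γ}

lemma splice_of_lt (hk : k < t) : splice t f g k = f k := if_pos hk

lemma splice_add (t k : ℕ) : splice t f g (t + k) = g k := by
  simp [splice]

lemma splice_zero_right (f g : ℕ → γ) : splice 0 f g = g := by
  ext k
  simpa using splice_add (f := f) (g := g) 0 k

lemma splice_mem {S : Set γ} (hf : ∀ k < t, f k ∈ S) (hg : ∀ k, g k ∈ S) (k : ℕ) :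
    splice t f g k ∈ S := by
  unfold splice
  split_ifs with hk
  · exact hf k hk
  · exact hg (k - t)

end splice

variable {F : α → β → Set α} {U : Set β}

lemma isAdmissibleRun_splice {ξ₁ ξ₂ : ℕ → α} {u₁ u₂ : ℕ → β} {t : ℕ}
    (h₁ : IsAdmissibleRun F U ξ₁ u₁) (h₂ : IsAdmissibleRun F U ξ₂ u₂) (hjoin : ξ₂ 0 = ξ₁ t) :
    IsAdmissibleRun F U (splice t ξ₁ ξ₂) (splice t u₁ u₂) := by
  intro k
  rcases lt_trichotomy (k + 1) t with hk | rfl | hk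
  · rw [splice_of_lt hk, splice_of_lt (by omega), splice_of_lt (by omega)]
    exact h₁ k
  · have hat : splice (k + 1) ξ₁ ξ₂ (k + 1) = ξ₁ (k + 1) := by
      simpa [hjoin] using splice_add (f := ξ₁) (g := ξ₂) (k + 1) 0
    rw [splice_of_lt k.lt_succ_self, splice_of_lt k.lt_succ_self, hat]
    exact h₁ k
  · obtain ⟨j, rfl⟩ := Nat.exists_eq_add_of_le (Nat.le_of_lt_succ hk)
    rw [add_assoc, splice_add, splice_add, splice_add]
    exact h₂ j

def ReachesWithin (F : α → β → Set α) (U : Set β) (S T : Set α) (n : ℕ) (x : α) : Prop :=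
  ∃ (ξ : ℕ → α) (u : ℕ → β), ξ 0 = x ∧ IsAdmissibleRun F U ξ u ∧
    (∃ r ≤ n, ξ r ∈ T) ∧ ∀ k, ξ k ∈ S

lemma ReachesWithin.mono_left {S S' T : Set α} {n : ℕ} {x : α} (hS : S ⊆ S')
    (h : ReachesWithin F U S T n x) : ReachesWithin F U S' T n x :=
  let ⟨ξ, u, hξ0, hrun, hT, hξS⟩ := h
  ⟨ξ, u, hξ0, hrun, hT, fun k => hS (hξS k)⟩

lemma reachesWithin_zero_of_invariant {S : Set α}
    (hinv : ∀ x ∈ S, ∃ v ∈ U, ∃ y ∈ F x v, y ∈ S) {x₀ : α} (hx₀ : x₀ ∈ S) :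
    ReachesWithin F U S S 0 x₀ := by
  choose next hnextU succ hsucc hsuccS using hinv
  let x : ℕ → S := fun k => Nat.rec ⟨x₀, hx₀⟩ (fun _ p => ⟨succ p.1 p.2, hsuccS p.1 p.2⟩) k
  exact ⟨fun k => (x k).1, fun k => next (x k).1 (x k).2, rfl,
    fun k => ⟨hnextU _ _, hsucc (x k).1 (x k).2⟩, ⟨0, le_rfl, hx₀⟩, fun k => (x k).2⟩

lemma reachesWithin_of_run_prefix {S T : Set α} {n M t : ℕ} {ξ : ℕ → α} {u : ℕ → β}
    (hrun : IsAdmissibleRun F U ξ u) (htn : t ≤ n) (hξS : ∀ s < t, ξ s ∈ S)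
    (htail : ReachesWithin F U S T M (ξ t)) : ReachesWithin F U S T (n + M) (ξ 0) := by
  obtain ⟨ξ₂, u₂, hjoin, h₂, ⟨r, hrM, hrT⟩, hξ₂S⟩ := htail
  refine ⟨splice t ξ ξ₂, splice t u u₂, ?_, isAdmissibleRun_splice hrun h₂ hjoin,
    ⟨t + r, by omega, by rwa [splice_add]⟩, splice_mem hξS hξ₂S⟩
  rcases t.eq_zero_or_pos with rfl | ht
  · rw [splice_zero_right, hjoin]
  · exact splice_of_lt ht

theorem set_theoretic_recursive_feasibility_general {d m : ℕ}
    (F : (Fin d → ℝ) → (Fin m → ℝ) → Set (Fin d → ℝ))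
    (U : Set (Fin m → ℝ)) (nstar N : ℕ) (Ξ : ℕ → Set (Fin d → ℝ))
    (hnested : ∀ l, 1 ≤ l → l ≤ nstar → Ξ (l - 1) ⊆ Ξ l)
    (hreach : ∀ l, 1 ≤ l → l ≤ nstar → ∀ ξ0 ∈ Ξ l,
      ∃ (ξ : ℕ → Fin d → ℝ) (u : ℕ → Fin m → ℝ), ξ 0 = ξ0 ∧
        (∀ k, u k ∈ U ∧ ξ (k + 1) ∈ F (ξ k) (u k)) ∧
        ∃ t, 1 ≤ t ∧ t ≤ N ∧ ξ t ∈ Ξ (l - 1) ∧ ∀ s ≤ t, ξ s ∈ Ξ l)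
    (hinv0 : ∀ ξ0 ∈ Ξ 0, ∃ u ∈ U, ∃ ξ' ∈ F ξ0 u, ξ' ∈ Ξ 0) :
    ∀ l, l ≤ nstar → ∀ ξ0 ∈ Ξ l,
      ∃ (ξ : ℕ → Fin d → ℝ) (u : ℕ → Fin m → ℝ), ξ 0 = ξ0 ∧
        (∀ k, u k ∈ U ∧ ξ (k + 1) ∈ F (ξ k) (u k)) ∧
        (∃ t, t ≤ l * N ∧ ξ t ∈ Ξ 0) ∧
        (∀ k, ξ k ∈ Ξ l) := by
  suffices h : ∀ l ≤ nstar, ∀ ξ0 ∈ Ξ l, ReachesWithin F U (Ξ l) (Ξ 0) (l * N) ξ0 from h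
  intro l
  induction l with
  | zero =>
    intro _ ξ0 hξ0
    simpa using reachesWithin_zero_of_invariant hinv0 hξ0
  | succ l ih =>
    intro hl ξ0 hξ0
    obtain ⟨ξ, u, rfl, hrun, t, -, htN, htΞ, hξΞ⟩ := hreach (l + 1) l.succ_pos hl ξ0 hξ0
    have hsub : Ξ l ⊆ Ξ (l + 1) := hnested (l + 1) l.succ_pos hl
    rw [Nat.succ_mul, Nat.add_comm (l * N)]
    exact reachesWithin_of_run_prefix hrun htN (fun s hs => hξΞ s hs.le)
      ((ih (by omega) (ξ t) htΞ).mono_left hsub)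

/-- Recursive feasibility and finite-time convergence of the set-theoretic
controller for an abstract transition system `ξ' ∈ F(ξ, u)`: if each `Ξ^l` has
the `N`-step backward reachability property towards `Ξ^{l−1}` and `Ξ⁰` is an
invariant equilibrium set, then from any `ξ₀ ∈ Ξ^l` there is an admissible
control sequence whose trajectory reaches `Ξ⁰` within `l·N` steps and remains
in `Ξ^l` at all times. -/
theorem set_theoretic_recursive_feasibility {d m : ℕ}
    (F : (Fin d → ℝ) → (Fin m → ℝ) → Set (Fin d → ℝ))
    (U : Set (Fin m → ℝ)) (nstar N : ℕ) (Ξ : ℕ → Set (Fin d → ℝ))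
    (hN : 1 ≤ N)
    (hnested : ∀ l, 1 ≤ l → l ≤ nstar → Ξ (l - 1) ⊆ Ξ l)
    (hreach : ∀ l, 1 ≤ l → l ≤ nstar → ∀ ξ0 ∈ Ξ l,
      ∃ (ξ : ℕ → Fin d → ℝ) (u : ℕ → Fin m → ℝ), ξ 0 = ξ0 ∧
        (∀ k, u k ∈ U ∧ ξ (k + 1) ∈ F (ξ k) (u k)) ∧
        ∃ t, 1 ≤ t ∧ t ≤ N ∧ ξ t ∈ Ξ (l - 1) ∧ ∀ s ≤ t, ξ s ∈ Ξ l)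
    (hinv0 : ∀ ξ0 ∈ Ξ 0, ∃ u ∈ U, ∃ ξ' ∈ F ξ0 u, ξ' ∈ Ξ 0) :
    ∀ l, l ≤ nstar → ∀ ξ0 ∈ Ξ l,
      ∃ (ξ : ℕ → Fin d → ℝ) (u : ℕ → Fin m → ℝ), ξ 0 = ξ0 ∧
        (∀ k, u k ∈ U ∧ ξ (k + 1) ∈ F (ξ k) (u k)) ∧
        (∃ t, t ≤ l * N ∧ ξ t ∈ Ξ 0) ∧
        (∀ k, ξ k ∈ Ξ l) :=
  set_theoretic_recursive_feasibility_general F U nstar N Ξ hnested hreach hinv0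
end
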